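/- Let (X,d,μ) be a metric measure space with sup_x μ(B(x,r)) ≤ Ce^{κr}, and let K_p : X × X → ℂ satisfy |K_p(x,x')| ≤ C₁ p^{N} e^{-μ₀√p d(x,x')} for some N, μ₀ > 0. Then for any 0 < μ₁ < μ₀ there is p₀ such that for p > p₀, α ∈ ℝ with |α| ≤ μ₁√p, and y ∈ X, the conjugated operator with kernel e^{α d(x,y)}K_p(x,x')e^{-α d(x',y)} is bounded on L²(X,μ) with norm at most C₂ p^{N} for C₂ independent of p, α, y. -/

import Mathlib

open MeasureTheory

/-!
By the triangle inequality, `α d(x,y) - α d(x',y) ≤ |α| d(x,x') ≤ μ₁ √p d(x,x')`, so the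
conjugated kernel is still bounded by `C₁ p^N e^{-(μ₀ - μ₁) √p d(x,x')}`. Once
`(μ₀ - μ₁) √p ≥ κ + 1`, summing over the annuli `n ≤ d(x,x') < n + 1` against the volume bound
gives a geometric series, so the row and column integrals of this kernel are `O(p^N)` uniformly
in `x`, `α`, `y` and `p`. Schur's test then bounds the operator on `L²`.
-/

theorem ENNReal.sq_lintegral_mul_le {α : Type*} [MeasurableSpace α] {μ : Measure α}
    {w g : α → ENNReal} (hw : AEMeasurable w μ) (hg : AEMeasurable g μ) :
    (∫⁻ a, w a * g a ∂μ) ^ 2 ≤ (∫⁻ a, w a ∂μ) * ∫⁻ a, w a * g a ^ 2 ∂μ := by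
  have hsqrt : ∀ a, w a ^ (1 / 2 : ℝ) * (w a * g a ^ 2) ^ (1 / 2 : ℝ) = w a * g a := fun a => by
    rw [← ENNReal.mul_rpow_of_nonneg _ _ (by norm_num), ← mul_assoc, ← sq, ← mul_pow,
      ← ENNReal.rpow_natCast, ← ENNReal.rpow_mul]
    norm_num
  have holder := ENNReal.lintegral_mul_norm_pow_le (g := fun a => w a * g a ^ 2) hw
    (hw.mul (hg.pow_const 2)) (p := 1 / 2) (q := 1 / 2) (by norm_num) (by norm_num) (by norm_num)
  simp only [hsqrt] at holder
  calc (∫⁻ a, w a * g a ∂μ) ^ 2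
      ≤ ((∫⁻ a, w a ∂μ) ^ (1 / 2 : ℝ) * (∫⁻ a, w a * g a ^ 2 ∂μ) ^ (1 / 2 : ℝ)) ^ 2 := by
        gcongr
    _ = (∫⁻ a, w a ∂μ) * ∫⁻ a, w a * g a ^ 2 ∂μ := by
        rw [mul_pow, ← ENNReal.rpow_natCast, ← ENNReal.rpow_natCast, ← ENNReal.rpow_mul,
          ← ENNReal.rpow_mul]
        norm_num

section SchurTest

variable {α β 𝕜 : Type*} [MeasurableSpace α] [MeasurableSpace β] [RCLike 𝕜]
  {μ : Measure α} {ν : Measure β} {k : α → β → 𝕜} {f : β → 𝕜} {A B : ENNReal}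

theorem lintegral_enorm_integral_kernel_sq_le [SFinite μ] [SFinite ν]
    (hk : Measurable (Function.uncurry k)) (hf : AEStronglyMeasurable f ν)
    (hrow : ∀ x, ∫⁻ y, ‖k x y‖ₑ ∂ν ≤ A) (hcol : ∀ y, ∫⁻ x, ‖k x y‖ₑ ∂μ ≤ B) :
    ∫⁻ x, ‖∫ y, k x y * f y ∂ν‖ₑ ^ 2 ∂μ ≤ A * B * ∫⁻ y, ‖f y‖ₑ ^ 2 ∂ν := by
  have hkx : ∀ x, Measurable fun y => ‖k x y‖ₑ := fun x =>
    (hk.comp measurable_prodMk_left).enorm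
  have hky : ∀ y, Measurable fun x => ‖k x y‖ₑ := fun y =>
    (hk.comp measurable_prodMk_right).enorm
  have hf2 : AEMeasurable (fun y => ‖f y‖ₑ ^ 2) ν := hf.enorm.pow_const 2
  have hprod : AEMeasurable (Function.uncurry fun x y => ‖k x y‖ₑ * ‖f y‖ₑ ^ 2) (μ.prod ν) :=
    hk.enorm.aemeasurable.mul hf2.comp_snd
  have hpointwise : ∀ x, ‖∫ y, k x y * f y ∂ν‖ₑ ^ 2 ≤ A * ∫⁻ y, ‖k x y‖ₑ * ‖f y‖ₑ ^ 2 ∂ν := by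
    intro x
    calc ‖∫ y, k x y * f y ∂ν‖ₑ ^ 2
        ≤ (∫⁻ y, ‖k x y‖ₑ * ‖f y‖ₑ ∂ν) ^ 2 := by
          gcongr
          simpa only [enorm_mul] using enorm_integral_le_lintegral_enorm (fun y => k x y * f y)
      _ ≤ (∫⁻ y, ‖k x y‖ₑ ∂ν) * ∫⁻ y, ‖k x y‖ₑ * ‖f y‖ₑ ^ 2 ∂ν :=
          ENNReal.sq_lintegral_mul_le (hkx x).aemeasurable hf.enorm
      _ ≤ A * ∫⁻ y, ‖k x y‖ₑ * ‖f y‖ₑ ^ 2 ∂ν := by gcongr; exact hrow x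
  calc ∫⁻ x, ‖∫ y, k x y * f y ∂ν‖ₑ ^ 2 ∂μ
      ≤ ∫⁻ x, A * ∫⁻ y, ‖k x y‖ₑ * ‖f y‖ₑ ^ 2 ∂ν ∂μ := lintegral_mono hpointwise
    _ = A * ∫⁻ x, ∫⁻ y, ‖k x y‖ₑ * ‖f y‖ₑ ^ 2 ∂ν ∂μ :=
        lintegral_const_mul'' _ hprod.lintegral_prod_right
    _ = A * ∫⁻ y, (∫⁻ x, ‖k x y‖ₑ ∂μ) * ‖f y‖ₑ ^ 2 ∂ν := by
        rw [lintegral_lintegral_swap hprod]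
        simp only [lintegral_mul_const _ (hky _)]
    _ ≤ A * ∫⁻ y, B * ‖f y‖ₑ ^ 2 ∂ν := by gcongr with y; exact hcol y
    _ = A * B * ∫⁻ y, ‖f y‖ₑ ^ 2 ∂ν := by rw [lintegral_const_mul'' _ hf2, mul_assoc]

theorem eLpNorm_integral_kernel_le [SFinite μ] [SFinite ν]
    (hk : Measurable (Function.uncurry k)) (hf : AEStronglyMeasurable f ν)
    (hrow : ∀ x, ∫⁻ y, ‖k x y‖ₑ ∂ν ≤ A) (hcol : ∀ y, ∫⁻ x, ‖k x y‖ₑ ∂μ ≤ B) :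
    eLpNorm (fun x => ∫ y, k x y * f y ∂ν) 2 μ ≤ (A * B) ^ (1 / 2 : ℝ) * eLpNorm f 2 ν := by
  simp only [eLpNorm_eq_lintegral_rpow_enorm_toReal two_ne_zero ENNReal.ofNat_ne_top,
    ENNReal.toReal_ofNat, ENNReal.rpow_two]
  rw [← ENNReal.mul_rpow_of_nonneg _ _ (by norm_num)]
  gcongr
  exact lintegral_enorm_integral_kernel_sq_le hk hf hrow hcol

theorem memLp_integral_kernel [SFinite μ] [SFinite ν]
    (hk : Measurable (Function.uncurry k)) (hf : MemLp f 2 ν)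
    (hrow : ∀ x, ∫⁻ y, ‖k x y‖ₑ ∂ν ≤ A) (hcol : ∀ y, ∫⁻ x, ‖k x y‖ₑ ∂μ ≤ B)
    (hA : A ≠ ⊤) (hB : B ≠ ⊤) :
    MemLp (fun x => ∫ y, k x y * f y ∂ν) 2 μ := by
  refine ⟨(hk.aestronglyMeasurable.mul hf.1.comp_snd).integral_prod_right', ?_⟩
  refine (eLpNorm_integral_kernel_le hk hf.1 hrow hcol).trans_lt ?_
  exact ENNReal.mul_lt_top (ENNReal.rpow_lt_top_of_nonneg (by norm_num)
    (ENNReal.mul_ne_top hA hB)) hf.2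

end SchurTest

section ExponentialDecay

variable {X : Type*} [PseudoMetricSpace X]

theorem exp_mul_dist_mul_exp_neg_mul_dist_le (α : ℝ) (x x' y : X) :
    Real.exp (α * dist x y) * Real.exp (-α * dist x' y) ≤ Real.exp (|α| * dist x x') := by
  rw [← Real.exp_add, Real.exp_le_exp]
  calc α * dist x y + -α * dist x' y = α * (dist x y - dist x' y) := by ring
    _ ≤ |α| * |dist x y - dist x' y| := by rw [← abs_mul]; exact le_abs_self _
    _ ≤ |α| * dist x x' := by gcongr; exact abs_dist_sub_le x x' y

theorem norm_exp_mul_dist_mul_mul_exp_neg_mul_dist_le {α s b M : ℝ} {z : ℂ} {x x' y : X}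
    (hα : |α| ≤ s) (hz : ‖z‖ ≤ M * Real.exp (b * dist x x')) :
    ‖(Real.exp (α * dist x y) : ℂ) * z * (Real.exp (-α * dist x' y) : ℂ)‖ ≤
      M * Real.exp ((b + s) * dist x x') := by
  have hweight : Real.exp (α * dist x y) * Real.exp (-α * dist x' y) ≤ Real.exp (s * dist x x') :=
    (exp_mul_dist_mul_exp_neg_mul_dist_le α x x' y).trans (by gcongr)
  calc ‖(Real.exp (α * dist x y) : ℂ) * z * (Real.exp (-α * dist x' y) : ℂ)‖
      = Real.exp (α * dist x y) * Real.exp (-α * dist x' y) * ‖z‖ := by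
        simp only [norm_mul, Complex.norm_real, Real.norm_eq_abs, Real.abs_exp]; ring
    _ ≤ Real.exp (s * dist x x') * (M * Real.exp (b * dist x x')) :=
        mul_le_mul hweight hz (norm_nonneg z) (Real.exp_nonneg _)
    _ = M * Real.exp ((b + s) * dist x x') := by
        rw [mul_left_comm, ← Real.exp_add]; ring_nf

variable [MeasurableSpace X] (μ : Measure X)

theorem lintegral_enorm_le_of_norm_le_mul_exp_neg_dist {k : X → X → ℂ} {M a S : ℝ}
    (hM : 0 ≤ M) (hk : ∀ x x', ‖k x x'‖ ≤ M * Real.exp (-a * dist x x'))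
    (hS : ∀ x, ∫⁻ x', ENNReal.ofReal (Real.exp (-a * dist x x')) ∂μ ≤ ENNReal.ofReal S) (x : X) :
    ∫⁻ x', ‖k x x'‖ₑ ∂μ ≤ ENNReal.ofReal (M * S) :=
  calc ∫⁻ x', ‖k x x'‖ₑ ∂μ
      ≤ ∫⁻ x', ENNReal.ofReal M * ENNReal.ofReal (Real.exp (-a * dist x x')) ∂μ := by
        refine lintegral_mono fun x' => ?_
        rw [← ofReal_norm, ← ENNReal.ofReal_mul hM]
        exact ENNReal.ofReal_le_ofReal (hk x x')
    _ = ENNReal.ofReal M * ∫⁻ x', ENNReal.ofReal (Real.exp (-a * dist x x')) ∂μ :=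
        lintegral_const_mul' _ _ ENNReal.ofReal_ne_top
    _ ≤ ENNReal.ofReal (M * S) := by
        rw [ENNReal.ofReal_mul hM]; gcongr; exact hS x

variable [OpensMeasurableSpace X]

theorem lintegral_exp_neg_mul_dist_le_tsum {a : ℝ} (ha : 0 ≤ a) (x : X) :
    ∫⁻ x', ENNReal.ofReal (Real.exp (-a * dist x x')) ∂μ ≤
      ∑' n : ℕ, ENNReal.ofReal (Real.exp (-a * n)) * μ (Metric.ball x (n + 1)) := by
  calc ∫⁻ x', ENNReal.ofReal (Real.exp (-a * dist x x')) ∂μ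
      ≤ ∫⁻ x', ∑' n : ℕ, (Metric.ball x (n + 1)).indicator
          (fun _ => ENNReal.ofReal (Real.exp (-a * n))) x' ∂μ := by
        refine lintegral_mono fun x' => ?_
        refine le_trans ?_ (ENNReal.le_tsum ⌊dist x x'⌋₊)
        have hball : x' ∈ Metric.ball x (⌊dist x x'⌋₊ + 1) := by
          rw [Metric.mem_ball, dist_comm]; exact Nat.lt_floor_add_one _
        rw [Set.indicator_of_mem hball]
        have hfloor : (⌊dist x x'⌋₊ : ℝ) ≤ dist x x' := Nat.floor_le dist_nonneg
        exact ENNReal.ofReal_le_ofReal (Real.exp_le_exp.2 (by nlinarith))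
    _ = ∑' n : ℕ, ENNReal.ofReal (Real.exp (-a * n)) * μ (Metric.ball x (n + 1)) := by
        rw [lintegral_tsum fun n => (measurable_const.indicator measurableSet_ball).aemeasurable]
        simp only [lintegral_indicator_const measurableSet_ball]

theorem lintegral_exp_neg_mul_dist_le_of_measure_ball_le {C κ δ a : ℝ} (hC : 0 ≤ C)
    (hvol : ∀ (x : X) (r : ℝ), 0 < r → μ (Metric.ball x r) ≤ ENNReal.ofReal (C * Real.exp (κ * r)))
    (hδ : 0 < δ) (ha₀ : 0 ≤ a) (ha : κ + δ ≤ a) (x : X) :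
    ∫⁻ x', ENNReal.ofReal (Real.exp (-a * dist x x')) ∂μ ≤
      ENNReal.ofReal (C * Real.exp κ / (1 - Real.exp (-δ))) := by
  have hr₀ : 0 ≤ Real.exp (-δ) := Real.exp_nonneg _
  have hr₁ : Real.exp (-δ) < 1 := Real.exp_lt_one_iff.2 (neg_lt_zero.2 hδ)
  have hterm : ∀ n : ℕ, ENNReal.ofReal (Real.exp (-a * n)) * μ (Metric.ball x (n + 1)) ≤
      ENNReal.ofReal (C * Real.exp κ * Real.exp (-δ) ^ n) := fun n => by
    calc ENNReal.ofReal (Real.exp (-a * n)) * μ (Metric.ball x (n + 1))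
        ≤ ENNReal.ofReal (Real.exp (-a * n)) * ENNReal.ofReal (C * Real.exp (κ * (n + 1))) := by
          gcongr; exact hvol x _ (by positivity)
      _ = ENNReal.ofReal (C * Real.exp κ * Real.exp ((κ - a) * n)) := by
          rw [← ENNReal.ofReal_mul (Real.exp_nonneg _)]
          congr 1
          rw [mul_left_comm, mul_assoc, ← Real.exp_add, ← Real.exp_add]; ring_nf
      _ ≤ ENNReal.ofReal (C * Real.exp κ * Real.exp (-δ) ^ n) := by
          rw [← Real.exp_nat_mul, mul_comm (n : ℝ)]
          gcongr
          linarith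
  calc ∫⁻ x', ENNReal.ofReal (Real.exp (-a * dist x x')) ∂μ
      ≤ ∑' n : ℕ, ENNReal.ofReal (C * Real.exp κ * Real.exp (-δ) ^ n) :=
        (lintegral_exp_neg_mul_dist_le_tsum μ ha₀ x).trans (ENNReal.tsum_le_tsum hterm)
    _ = ENNReal.ofReal (C * Real.exp κ / (1 - Real.exp (-δ))) := by
        rw [← ENNReal.ofReal_tsum_of_nonneg (fun n => by positivity)
          ((summable_geometric_of_lt_one hr₀ hr₁).mul_left _), tsum_mul_left,
          tsum_geometric_of_lt_one hr₀ hr₁, div_eq_mul_inv]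

end ExponentialDecay

theorem exists_nat_forall_lt_le_mul_sqrt (b : ℝ) {c : ℝ} (hc : 0 < c) :
    ∃ p₀ : ℕ, ∀ p : ℕ, p₀ < p → b ≤ c * Real.sqrt p := by
  refine ⟨⌈(b / c) ^ 2⌉₊, fun p hp => ?_⟩
  have hsq : (b / c) ^ 2 < p := (Nat.le_ceil _).trans_lt (by exact_mod_cast hp)
  rw [← div_le_iff₀' hc]
  exact (le_abs_self _).trans (Real.abs_le_sqrt hsq.le)

theorem conjugated_operator_bound_general
    {X : Type*} [MetricSpace X] [MeasurableSpace X] [BorelSpace X]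
    (μ : Measure X) [SigmaFinite μ]
    (C κ : ℝ) (hC : 0 < C)
    (hvol : ∀ (x : X) (r : ℝ), 0 < r →
      μ (Metric.ball x r) ≤ ENNReal.ofReal (C * Real.exp (κ * r)))
    (K : ℕ → X → X → ℂ) (hKmeas : ∀ p, Measurable (Function.uncurry (K p)))
    (C₁ μ₀ : ℝ) (N : ℕ) (hC₁ : 0 < C₁)
    (hK : ∀ (p : ℕ) (x x' : X),
      ‖K p x x'‖ ≤ C₁ * (p : ℝ) ^ N * Real.exp (-μ₀ * Real.sqrt p * dist x x')) :
    ∀ μ₁ : ℝ, 0 < μ₁ → μ₁ < μ₀ →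
      ∃ p₀ : ℕ, ∃ C₂ : ℝ, 0 < C₂ ∧
        ∀ p : ℕ, p₀ < p → ∀ α : ℝ, |α| ≤ μ₁ * Real.sqrt p → ∀ y : X,
          ∀ f : X → ℂ, MemLp f 2 μ →
            MemLp (fun x => ∫ x',
              (Real.exp (α * dist x y) : ℂ) * K p x x' *
                (Real.exp (-α * dist x' y) : ℂ) * f x' ∂μ) 2 μ ∧
            eLpNorm (fun x => ∫ x',
                (Real.exp (α * dist x y) : ℂ) * K p x x' *
                  (Real.exp (-α * dist x' y) : ℂ) * f x' ∂μ) 2 μ ≤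
              ENNReal.ofReal (C₂ * (p : ℝ) ^ N) * eLpNorm f 2 μ := by
  intro μ₁ _ hμ₁₀
  set S := C * Real.exp κ / (1 - Real.exp (-1))
  have hS₀ : 0 < S := div_pos (by positivity) (sub_pos.2 (Real.exp_lt_one_iff.2 neg_one_lt_zero))
  obtain ⟨p₀, hp₀⟩ := exists_nat_forall_lt_le_mul_sqrt (κ + 1) (sub_pos.2 hμ₁₀)
  refine ⟨p₀, C₁ * S, mul_pos hC₁ hS₀, fun p hp α hα y f hf => ?_⟩
  set a := (μ₀ - μ₁) * Real.sqrt p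
  set k : X → X → ℂ := fun x x' =>
    (Real.exp (α * dist x y) : ℂ) * K p x x' * (Real.exp (-α * dist x' y) : ℂ)
  have hk : Measurable (Function.uncurry k) := by
    have := hKmeas p
    fun_prop
  have hdecay : ∀ x x', ‖k x x'‖ ≤ C₁ * (p : ℝ) ^ N * Real.exp (-a * dist x x') := fun x x' =>
    (norm_exp_mul_dist_mul_mul_exp_neg_mul_dist_le hα (hK p x x')).trans_eq
      (by simp only [a]; ring_nf)
  have hS : ∀ x, ∫⁻ x', ENNReal.ofReal (Real.exp (-a * dist x x')) ∂μ ≤ ENNReal.ofReal S :=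
    lintegral_exp_neg_mul_dist_le_of_measure_ball_le μ hC.le hvol one_pos
      (mul_nonneg (sub_nonneg.2 hμ₁₀.le) (Real.sqrt_nonneg _)) (hp₀ p hp)
  have hM : 0 ≤ C₁ * (p : ℝ) ^ N := by positivity
  have hrow := lintegral_enorm_le_of_norm_le_mul_exp_neg_dist μ hM hdecay hS
  have hcol := lintegral_enorm_le_of_norm_le_mul_exp_neg_dist μ hM (k := fun x' x => k x x')
    (fun x' x => dist_comm x x' ▸ hdecay x x') hS
  refine ⟨memLp_integral_kernel hk hf hrow hcol ENNReal.ofReal_ne_top ENNReal.ofReal_ne_top, ?_⟩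
  calc eLpNorm (fun x => ∫ x', k x x' * f x' ∂μ) 2 μ
      ≤ (ENNReal.ofReal (C₁ * p ^ N * S) * ENNReal.ofReal (C₁ * p ^ N * S)) ^ (1 / 2 : ℝ) *
          eLpNorm f 2 μ := eLpNorm_integral_kernel_le hk hf.1 hrow hcol
    _ = ENNReal.ofReal (C₁ * S * p ^ N) * eLpNorm f 2 μ := by
        rw [← sq, ← ENNReal.rpow_natCast, ← ENNReal.rpow_mul, mul_right_comm]
        norm_num

/-- on a metric measure space with uniform exponential volume growth
`μ(B(x,r)) ≤ C e^{κ r}`, if the kernels `K_p` satisfy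
`|K_p(x,x')| ≤ C₁ p^N e^{-μ₀ √p d(x,x')}` with `μ₀ > 0`, then for any `0 < μ₁ < μ₀`
there is `p₀` such that for `p > p₀`, `|α| ≤ μ₁ √p` and any `y`, the conjugated operator
with kernel `e^{α d(x,y)} K_p(x,x') e^{-α d(x',y)}` is bounded on `L²(X,μ)` with norm at
most `C₂ p^N`, where `C₂` is independent of `p`, `α` and `y`. -/
theorem conjugated_operator_bound
    {X : Type*} [MetricSpace X] [MeasurableSpace X] [BorelSpace X]
    (μ : Measure X) [SigmaFinite μ]
    (C κ : ℝ) (hC : 0 < C) (hκ : 0 < κ)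
    (hvol : ∀ (x : X) (r : ℝ), 0 < r →
      μ (Metric.ball x r) ≤ ENNReal.ofReal (C * Real.exp (κ * r)))
    (K : ℕ → X → X → ℂ) (hKmeas : ∀ p, Measurable (Function.uncurry (K p)))
    (C₁ μ₀ : ℝ) (N : ℕ) (hC₁ : 0 < C₁) (hμ₀ : 0 < μ₀)
    (hK : ∀ (p : ℕ) (x x' : X),
      ‖K p x x'‖ ≤ C₁ * (p : ℝ) ^ N * Real.exp (-μ₀ * Real.sqrt p * dist x x')) :
    ∀ μ₁ : ℝ, 0 < μ₁ → μ₁ < μ₀ →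
      ∃ p₀ : ℕ, ∃ C₂ : ℝ, 0 < C₂ ∧
        ∀ p : ℕ, p₀ < p → ∀ α : ℝ, |α| ≤ μ₁ * Real.sqrt p → ∀ y : X,
          ∀ f : X → ℂ, MemLp f 2 μ →
            MemLp (fun x => ∫ x',
              (Real.exp (α * dist x y) : ℂ) * K p x x' *
                (Real.exp (-α * dist x' y) : ℂ) * f x' ∂μ) 2 μ ∧
            eLpNorm (fun x => ∫ x',
                (Real.exp (α * dist x y) : ℂ) * K p x x' *
                  (Real.exp (-α * dist x' y) : ℂ) * f x' ∂μ) 2 μ ≤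
              ENNReal.ofReal (C₂ * (p : ℝ) ^ N) * eLpNorm f 2 μ :=
  conjugated_operator_bound_general μ C κ hC hvol K hKmeas C₁ μ₀ N hC₁ hK
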